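/- arXiv:1407.8142 — 4 statements merged into one kernel-verified Lean document; each statement's English description precedes it below -/
import Mathlib

section
/- In a list of n elements where X[i] = 1 if element i goes left and 0 otherwise, let P[i] be the prefix sum of X up to (but not including) index i and let X_s be the total sum. Then the target-position map sending a left element i to P[i] and a right element i to X_s + i - P[i] is a bijection from {0,...,n-1} to {0,...,n-1}. -/
/-!
Order the elements by the key `(side, index)` lexicographically, with left before right. The
target of `i` is exactly the number of elements whose key is smaller than that of `i`: the left
elements before `i` if `i` goes left, and all `X_s` left elements plus the right elements before
`i` otherwise. The rank of an element under an injective key into a linear order is a bijection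
onto `{0, …, n-1}`.
-/

open Finset

theorem Finset.sum_eq_card_filter_eq_one {ι : Type*} (s : Finset ι) {X : ι → ℕ}
    (hX : ∀ i ∈ s, X i ≤ 1) : ∑ i ∈ s, X i = #{i ∈ s | X i = 1} := by
  rw [card_filter]
  exact sum_congr rfl fun i hi => by have := hX i hi; split_ifs <;> omega

theorem bijOn_card_filter_apply_lt {ι α : Type*} [Fintype ι] [LinearOrder α] {f : ι → α}
    (hf : Function.Injective f) :
    Set.BijOn (fun i => #{j | f j < f i}) Set.univ {m | m < Fintype.card ι} := by
  have rank_lt_rank {i j : ι} (h : f i < f j) : #{k | f k < f i} < #{k | f k < f j} := by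
    refine card_lt_card ⟨fun k hk => ?_, fun hsub => ?_⟩
    · simp only [mem_filter, mem_univ, true_and] at hk ⊢
      exact hk.trans h
    · exact lt_irrefl _ (mem_filter.1 (hsub (mem_filter.2 ⟨mem_univ _, h⟩))).2
  have hmaps : Set.MapsTo (fun i => #{j | f j < f i}) Set.univ {m | m < Fintype.card ι} :=
    fun i _ => card_lt_card (filter_ssubset.2 ⟨i, mem_univ i, lt_irrefl _⟩)
  have hinj : Set.InjOn (fun i => #{j | f j < f i}) Set.univ := by
    intro i _ j _ hij
    by_contra hne
    rcases (hf.ne hne).lt_or_gt with h | h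
    · exact (rank_lt_rank h).ne hij
    · exact (rank_lt_rank h).ne' hij
  refine ⟨hmaps, hinj, fun m hm => ?_⟩
  simpa using surjOn_of_injOn_of_card_le (s := univ) (t := range (Fintype.card ι))
    (fun i => #{j | f j < f i}) (by simpa using hmaps) (by simpa using hinj) (by simp)
    (mem_range.2 hm)

section StablePartition

variable {n : ℕ} (p : Fin n → Prop) [DecidablePred p]

def stablePartitionKey (i : Fin n) : Bool ×ₗ Fin n := toLex (!decide (p i), i)

theorem card_filter_stablePartitionKey_lt (i : Fin n) :
    #{j | stablePartitionKey p j < stablePartitionKey p i} =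
      if p i then #{j | j < i ∧ p j} else #{j | p j} + #{j | j < i ∧ ¬p j} := by
  by_cases hi : p i
  · have not_lt_false (b : Bool) : ¬b < false := by cases b <;> decide
    simp [stablePartitionKey, Prod.Lex.toLex_lt_toLex, hi, not_lt_false, and_comm]
  · rw [if_neg hi, ← card_union_of_disjoint]
    · congr 1
      ext j
      by_cases hj : p j <;> simp [stablePartitionKey, Prod.Lex.toLex_lt_toLex, hi, hj]
    · exact disjoint_filter.2 fun j _ hj h => h.2 hj

theorem bijOn_stablePartition :
    Set.BijOn (fun i => if p i then #{j | j < i ∧ p j} else #{j | p j} + #{j | j < i ∧ ¬p j})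
      Set.univ {m | m < n} := by
  have := bijOn_card_filter_apply_lt (f := stablePartitionKey p) fun i j h => by
    simpa [stablePartitionKey] using congrArg (·.2) (congrArg ofLex h)
  simpa only [card_filter_stablePartitionKey_lt, Fintype.card_fin] using this

end StablePartition

/-- the stable-partition target map (left element `i` goes to `P[i]`,
right element `i` goes to `X_s + i - P[i]`) is a bijection from `{0,...,n-1}` to itself. -/
theorem stable_partition_bijective (n : ℕ) (X : Fin n → ℕ) (hX : ∀ i, X i ≤ 1) :
    let P : Fin n → ℕ := fun i => ∑ j : Fin n, if (j : ℕ) < (i : ℕ) then X j else 0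
    let Xs : ℕ := ∑ j : Fin n, X j
    let target : Fin n → ℕ := fun i => if X i = 1 then P i else Xs + (i : ℕ) - P i
    Set.BijOn target Set.univ {m : ℕ | m < n} := by
  intro P Xs target
  have hP (i : Fin n) : P i = #{j | j < i ∧ X j = 1} := by
    rw [← filter_filter, ← sum_eq_card_filter_eq_one _ fun j _ => hX j, sum_filter]
    rfl
  have hXs : Xs = #{j | X j = 1} := sum_eq_card_filter_eq_one _ fun j _ => hX j
  have hsplit (i : Fin n) : #{j | j < i ∧ X j = 1} + #{j | j < i ∧ ¬X j = 1} = i := by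
    rw [← filter_filter, ← filter_filter, card_filter_add_card_filter_not, filter_gt_eq_Iio,
      Fin.card_Iio]
  refine (bijOn_stablePartition fun j => X j = 1).congr fun i _ => ?_
  have := hsplit i
  simp only [target, hP, hXs]
  split_ifs <;> omega
end

section
/- If T is the stable sort of a list S of symbols (each < 2^L) by the key k_l(s) = s >> (L - l), then for each value v the elements of T with key v form a contiguous block, and the multiset of blocks equals the multiset of per-node subsequences of S in the wavelet tree at level l; in particular, the indices i where k_l(T[i]) ≠ k_l(T[i-1]) (together with 0 and |T|) delimit exactly the node bitmap boundaries at level l. -/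
/-!
A list sorted by a key `k` is the concatenation of its elements with key `< v`, with key `= v`
and with key `> v`, in this order, so the elements with key `v` occupy the index range between
the lengths of the first part and of the first two parts. Stability says that this middle part,
the filter of `T` by `k s = v`, is the filter of `S` by `k s = v`, i.e. the node subsequence.
-/

/-- `T` is the stable sort of `S` by the key `k`. -/
def IsStableSortBy (k : ℕ → ℕ) (S T : List ℕ) : Prop :=
  T.Pairwise (fun a b => k a ≤ k b) ∧
  ∀ v : ℕ, T.filter (fun s => k s = v) = S.filter (fun s => k s = v)

namespace List

variable {α β : Type*} [LinearOrder β] {k : α → β}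

theorem getD_mem {l : List α} {n : ℕ} (d : α) (h : n < l.length) : l.getD n d ∈ l := by
  rw [getD_eq_getElem _ _ h]
  exact getElem_mem h

theorem Pairwise.filter_lt_append_filter_eq_append_filter_gt {l : List α}
    (hl : l.Pairwise (fun a b => k a ≤ k b)) (v : β) :
    l.filter (fun s => k s < v) ++ l.filter (fun s => k s = v) ++ l.filter (fun s => v < k s)
      = l := by
  induction l with
  | nil => rfl
  | cons a t ih =>
    obtain ⟨ha, ht⟩ := pairwise_cons.mp hl
    have ih := ih ht
    rcases lt_trichotomy (k a) v with hlt | heq | hgt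
    · simp [hlt, hlt.ne, hlt.not_gt, ih]
    · have hlt : t.filter (fun s => k s < v) = [] := by
        simpa [filter_eq_nil_iff, heq] using ha
      simpa [heq, hlt] using ih
    · have hlt : t.filter (fun s => k s < v) = [] := by
        simpa [filter_eq_nil_iff] using fun b hb => (hgt.trans_le (ha b hb)).le
      have heq : t.filter (fun s => k s = v) = [] := by
        simpa [filter_eq_nil_iff] using fun b hb => (hgt.trans_le (ha b hb)).ne'
      simpa [hgt, hgt.ne', hgt.not_gt, hlt, heq] using ih

theorem Pairwise.exists_block_eq_filter {l : List α}
    (hl : l.Pairwise (fun a b => k a ≤ k b)) (v : β) (d : α) :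
    ∃ i j : ℕ, i ≤ j ∧ j ≤ l.length ∧
      (l.drop i).take (j - i) = l.filter (fun s => k s = v) ∧
      (i = 0 ∨ i = l.length ∨ k (l.getD (i - 1) d) ≠ v) ∧
      (j = l.length ∨ k (l.getD j d) ≠ v) ∧
      ∀ p : ℕ, i ≤ p → p < j → k (l.getD p d) = v := by
  set A := l.filter (fun s => k s < v)
  set B := l.filter (fun s => k s = v)
  set C := l.filter (fun s => v < k s)
  have hsplit : A ++ B ++ C = l := hl.filter_lt_append_filter_eq_append_filter_gt v
  have hlen : l.length = A.length + B.length + C.length := by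
    simp [← hsplit, Nat.add_assoc]
  refine ⟨A.length, A.length + B.length, by omega, by omega, ?_, ?_, ?_, ?_⟩
  · rw [← hsplit, append_assoc, drop_left, Nat.add_sub_cancel_left, take_left]
  · refine or_iff_not_imp_left.mpr fun hA => Or.inr ?_
    have hmem : l.getD (A.length - 1) d ∈ A := by
      rw [← hsplit, append_assoc, getD_append _ _ _ _ (by omega)]
      exact getD_mem d (by omega)
    exact (decide_eq_true_iff.mp (mem_filter.mp hmem).2).ne
  · refine or_iff_not_imp_left.mpr fun hC => ?_
    have hmem : l.getD (A.length + B.length) d ∈ C := by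
      rw [← hsplit, getD_append_right _ _ _ _ (by simp), length_append, Nat.sub_self]
      exact getD_mem d (by omega)
    exact (decide_eq_true_iff.mp (mem_filter.mp hmem).2).ne'
  · intro p hp hpj
    have hmem : l.getD p d ∈ B := by
      rw [← hsplit, append_assoc, getD_append_right _ _ _ _ hp, getD_append _ _ _ _ (by omega)]
      exact getD_mem d (by omega)
    exact decide_eq_true_iff.mp (mem_filter.mp hmem).2

end List

theorem stable_sort_blocks_general (L l : ℕ) (S T : List ℕ)
    (hT : IsStableSortBy (fun s => s >>> (L - l)) S T) :
    ∀ v : ℕ, ∃ i j : ℕ, i ≤ j ∧ j ≤ T.length ∧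
      ((T.drop i).take (j - i) = S.filter (fun s => s >>> (L - l) = v)) ∧
      (i = 0 ∨ i = T.length ∨ (T.getD (i - 1) 0) >>> (L - l) ≠ v) ∧
      (j = T.length ∨ (T.getD j 0) >>> (L - l) ≠ v) ∧
      (∀ p : ℕ, i ≤ p → p < j → (T.getD p 0) >>> (L - l) = v) := by
  intro v
  rw [← hT.2 v]
  exact hT.1.exists_block_eq_filter v 0

/-- if `T` is the stable sort of `S` by `k_l(s) = s >>> (L - l)`, then for
each value `v` the elements of `T` with key `v` form a contiguous block equal to the
per-node subsequence of `S` at level `l` with value `v`, and the block boundaries are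
exactly the indices where the key changes. -/
theorem stable_sort_blocks (L l : ℕ) (hl : l ≤ L) (S T : List ℕ)
    (hS : ∀ s ∈ S, s < 2 ^ L)
    (hT : IsStableSortBy (fun s => s >>> (L - l)) S T) :
    ∀ v : ℕ, ∃ i j : ℕ, i ≤ j ∧ j ≤ T.length ∧
      ((T.drop i).take (j - i) = S.filter (fun s => s >>> (L - l) = v)) ∧
      (i = 0 ∨ i = T.length ∨ (T.getD (i - 1) 0) >>> (L - l) ≠ v) ∧
      (j = T.length ∨ (T.getD j 0) >>> (L - l) ≠ v) ∧
      (∀ p : ℕ, i ≤ p → p < j → (T.getD p 0) >>> (L - l) = v) :=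
  stable_sort_blocks_general L l S T hT
end

section
/- In the wavelet matrix reordering, where at each level l the sequence is stably partitioned by the l-th highest bit (0s before 1s, globally across the whole sequence), the resulting order of the sequence before processing level l equals the stable sort of the original sequence by the bit-reversal of the top l bits of each symbol. -/
/-- Reversal of the low `l` bits of `x` (viewed as an `l`-bit string). -/
def bitRev (l x : ℕ) : ℕ :=
  ∑ j ∈ Finset.range l, ((x >>> j) % 2) * 2 ^ (l - 1 - j)

/-! Each level is one pass of an LSD radix sort: in the bit-reversed key of the top `l + 1`
bits, the `(l + 1)`-st highest bit is the most significant digit, above the reversed top `l`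
bits. A stable partition by that digit of a list already stably sorted by the lower digits sorts
it stably by the whole key: across classes the new digit decides, and within a class the previous
order survives. -/

lemma bitRev_succ (l x : ℕ) : bitRev (l + 1) x = x % 2 * 2 ^ l + bitRev l (x >>> 1) := by
  unfold bitRev
  rw [Finset.sum_range_succ', Nat.add_comm]
  congr 1
  refine Finset.sum_congr rfl fun j _ => ?_
  rw [Nat.add_comm j 1, Nat.shiftRight_add, show l + 1 - 1 - (1 + j) = l - 1 - j by omega]

lemma bitRev_lt (l x : ℕ) : bitRev l x < 2 ^ l := by
  induction l generalizing x with
  | zero => simp [bitRev]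
  | succ l ih =>
    rw [bitRev_succ, pow_succ]
    have := ih (x >>> 1)
    have : x % 2 ≤ 1 := by omega
    nlinarith

lemma bitRev_succ_shiftRight {L l : ℕ} (hl : l < L) (s : ℕ) :
    bitRev (l + 1) (s >>> (L - (l + 1))) =
      (s >>> (L - 1 - l)) % 2 * 2 ^ l + bitRev l (s >>> (L - l)) := by
  rw [bitRev_succ, ← Nat.shiftRight_add, show L - (l + 1) = L - 1 - l by omega,
    show L - 1 - l + 1 = L - l by omega]

lemma List.Pairwise.lt_or_of_pairwise_fibers {α β : Type*} [LinearOrder β] {r : α → α → Prop}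
    {d : α → β} {U : List α}
    (hU : U.Pairwise (fun a c => d a ≤ d c))
    (hfib : ∀ v, (U.filter (fun s => d s = v)).Pairwise r) :
    U.Pairwise (fun a c => d a < d c ∨ d a = d c ∧ r a c) := by
  induction U with
  | nil => exact .nil
  | cons a t ih =>
    rw [List.pairwise_cons] at hU ⊢
    have hfib_a := hfib (d a)
    rw [List.filter_cons_of_pos (by simp), List.pairwise_cons] at hfib_a
    refine ⟨fun c hc => ?_, ih hU.2 fun v => ?_⟩
    · rcases (hU.1 c hc).lt_or_eq with hlt | heq
      · exact .inl hlt
      · exact .inr ⟨heq, hfib_a.1 c (List.mem_filter.2 ⟨hc, by simp [heq]⟩)⟩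
    · have := hfib v
      rw [List.filter_cons] at this
      split at this
      · exact (List.pairwise_cons.1 this).2
      · exact this

lemma IsStableSortBy.radix_step {k d : ℕ → ℕ} {m : ℕ} {S T U : List ℕ}
    (hT : IsStableSortBy k S T) (hk : ∀ s, k s < m) (hU : IsStableSortBy d T U) :
    IsStableSortBy (fun s => d s * m + k s) S U := by
  obtain ⟨hT_sorted, hT_fib⟩ := hT
  obtain ⟨hU_sorted, hU_fib⟩ := hU
  constructor
  · have hfib : ∀ v, (U.filter (fun s => d s = v)).Pairwise (fun a c => k a ≤ k c) :=
      fun v => hU_fib v ▸ hT_sorted.filter _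
    refine (hU_sorted.lt_or_of_pairwise_fibers hfib).imp fun {a c} h => ?_
    rcases h with hlt | ⟨heq, hle⟩
    · have hmul := Nat.mul_le_mul_right m (Nat.succ_le_of_lt hlt)
      have := hk a
      rw [Nat.succ_mul] at hmul
      dsimp only
      omega
    · simp only [heq]
      omega
  · intro w
    have hkey : (fun s => decide (d s * m + k s = w)) =
        fun s => decide (k s = w % m) && decide (d s = w / m) := by
      funext s
      have hm : 0 < m := (Nat.zero_le _).trans_lt (hk s)
      have hiff : d s * m + k s = w ↔ k s = w % m ∧ d s = w / m := by
        rw [eq_comm (a := k s), eq_comm (a := d s), and_comm, Nat.div_mod_unique hm, Nat.mul_comm]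
        exact ⟨fun h => ⟨by omega, hk s⟩, fun h => by omega⟩
      simp only [hiff, Bool.decide_and]
    rw [hkey, ← List.filter_filter, hU_fib, List.filter_comm, hT_fib, List.filter_comm,
      List.filter_filter]

lemma isStableSortBy_filter_append_filter {d : ℕ → ℕ} (hd : ∀ s, d s < 2) (T : List ℕ) :
    IsStableSortBy d T (T.filter (fun s => d s = 0) ++ T.filter (fun s => d s = 1)) := by
  have mem_filter {v a} (ha : a ∈ T.filter (fun s => d s = v)) : d a = v := by
    simpa using (List.mem_filter.1 ha).2
  constructor
  · refine List.pairwise_append.2 ⟨?_, ?_, fun a ha c hc => ?_⟩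
    · exact List.pairwise_of_forall_mem_list fun a ha c hc => by rw [mem_filter ha, mem_filter hc]
    · exact List.pairwise_of_forall_mem_list fun a ha c hc => by rw [mem_filter ha, mem_filter hc]
    · rw [mem_filter ha, mem_filter hc]; omega
  · intro v
    rw [List.filter_append, List.filter_filter, List.filter_filter]
    obtain rfl | rfl | hv : v = 0 ∨ v = 1 ∨ 2 ≤ v := by omega
    · simp +contextual
    · simp +contextual
    · have : ∀ s, decide (d s = v) = false := fun s => decide_eq_false (by have := hd s; omega)
      simp [this]

theorem wavelet_matrix_order_general (L : ℕ) (S : List ℕ)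
    (f : ℕ → List ℕ) (hf0 : f 0 = S)
    (hfsucc : ∀ l < L, f (l + 1) =
      (f l).filter (fun s => (s >>> (L - 1 - l)) % 2 = 0) ++
      (f l).filter (fun s => (s >>> (L - 1 - l)) % 2 = 1)) :
    ∀ l ≤ L, IsStableSortBy (fun s => bitRev l (s >>> (L - l))) S (f l) := by
  intro l hl
  induction l with
  | zero => exact hf0 ▸ ⟨List.pairwise_of_forall fun _ _ => by simp [bitRev], fun _ => rfl⟩
  | succ l ih =>
    have hlL : l < L := hl
    have hpartition : IsStableSortBy (fun s => (s >>> (L - 1 - l)) % 2) (f l) (f (l + 1)) :=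
      hfsucc l hlL ▸ isStableSortBy_filter_append_filter (fun _ => Nat.mod_lt _ two_pos) (f l)
    have hstep := (ih hlL.le).radix_step (fun _ => bitRev_lt l _) hpartition
    simpa only [bitRev_succ_shiftRight hlL] using hstep

/-- in the wavelet matrix reordering, where level `l` stably partitions the
whole current sequence by the `(l+1)`-st highest bit, the sequence before processing level
`l` is the stable sort of the original sequence by the bit-reversal of the top `l` bits. -/
theorem wavelet_matrix_order (L : ℕ) (S : List ℕ) (hS : ∀ s ∈ S, s < 2 ^ L)
    (f : ℕ → List ℕ) (hf0 : f 0 = S)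
    (hfsucc : ∀ l < L, f (l + 1) =
      (f l).filter (fun s => (s >>> (L - 1 - l)) % 2 = 0) ++
      (f l).filter (fun s => (s >>> (L - 1 - l)) % 2 = 1)) :
    ∀ l ≤ L, IsStableSortBy (fun s => bitRev l (s >>> (L - l))) S (f l) :=
  wavelet_matrix_order_general L S f hf0 hfsucc
end

section
/- Let filter keep the elements of a list X satisfying a predicate f, and let P be the exclusive prefix sum of the indicator of f over X. Then the element X[i] with f(X[i]) true is placed at output position P[i] in the filtered list, this assignment is injective, and the filtered list has length P[n]; consequently the filtered list preserves the relative order of the kept elements. -/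
/-! The kept elements before position `i` are exactly the first `P i` entries of `X.filter f`,
so when `X[i]` is kept it is the next entry, at position `P i`. Each kept element raises the
count by one, so `P` is strictly increasing along kept positions, which gives both injectivity
and order preservation. -/

namespace List

variable {α : Type*} (f : α → Bool) {l : List α} {i j : ℕ}

theorem filter_eq_filter_take_append_cons (h : i < l.length) (hf : f l[i] = true) :
    l.filter f = (l.take i).filter f ++ l[i] :: (l.drop (i + 1)).filter f := by
  conv_lhs => rw [← take_append_drop i l, drop_eq_getElem_cons h]
  rw [filter_append, filter_cons_of_pos hf]

theorem getElem?_filter_length_filter_take (h : i < l.length) (hf : f l[i] = true) :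
    (l.filter f)[((l.take i).filter f).length]? = some l[i] := by
  rw [filter_eq_filter_take_append_cons f h hf, getElem?_append_right le_rfl, Nat.sub_self,
    getElem?_cons_zero]

theorem length_filter_take_succ (h : i < l.length) (hf : f l[i] = true) :
    ((l.take (i + 1)).filter f).length = ((l.take i).filter f).length + 1 := by
  rw [take_add_one, getElem?_eq_getElem h, filter_append, length_append]
  simp [hf]

theorem monotone_length_filter_take (l : List α) :
    Monotone fun i => ((l.take i).filter f).length :=
  fun _ _ hij => ((take_prefix_take_left (l := l) hij).filter f).sublist.length_le

theorem strictMonoOn_length_filter_take (l : List α) :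
    StrictMonoOn (fun i => ((l.take i).filter f).length)
      {i | ∃ h : i < l.length, f l[i] = true} := by
  rintro i ⟨hi, hfi⟩ j - hij
  calc ((l.take i).filter f).length
      < ((l.take (i + 1)).filter f).length := by rw [length_filter_take_succ f hi hfi]; omega
    _ ≤ ((l.take j).filter f).length := monotone_length_filter_take f l hij

end List

/-- with `P i` the exclusive prefix sum of the indicator of `f` over `X`
(i.e. the number of kept elements among the first `i`), a kept element `X[i]` is placed at
output position `P i` of `X.filter f`, this assignment is injective, and the filtered list
has length `P n`; hence the filter preserves the relative order of kept elements. -/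
theorem filter_prefix_sum_spec {α : Type*} (X : List α) (f : α → Bool) :
    let P : ℕ → ℕ := fun i => ((X.take i).filter f).length
    (∀ i : ℕ, ∀ h : i < X.length, f (X.get ⟨i, h⟩) = true →
      (X.filter f)[P i]? = some (X.get ⟨i, h⟩)) ∧
    (∀ i j : ℕ, ∀ hi : i < X.length, ∀ hj : j < X.length,
      f (X.get ⟨i, hi⟩) = true → f (X.get ⟨j, hj⟩) = true → P i = P j → i = j) ∧
    (X.filter f).length = P X.length ∧
    (∀ i j : ℕ, ∀ hi : i < X.length, ∀ hj : j < X.length, i < j →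
      f (X.get ⟨i, hi⟩) = true → f (X.get ⟨j, hj⟩) = true → P i < P j) := by
  intro P
  have hP : StrictMonoOn P {i | ∃ h : i < X.length, f X[i] = true} :=
    X.strictMonoOn_length_filter_take f
  refine ⟨fun i h hf => List.getElem?_filter_length_filter_take f h hf,
    fun i j hi hj hfi hfj hij => hP.injOn ⟨hi, hfi⟩ ⟨hj, hfj⟩ hij, ?_,
    fun i j hi hj hij hfi hfj => hP ⟨hi, hfi⟩ ⟨hj, hfj⟩ hij⟩
  simp only [P, List.take_length]
end
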